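/- arXiv:2505.23117 — 2 statements merged into one kernel-verified Lean document; each statement's English description precedes it below -/
import Mathlib

section
/- Let {A_j}_{j=1}^k be matrices in ℝ^{m×n}, let M = [A_1 … A_k] ∈ ℝ^{m×(kn)} be their horizontal concatenation, let M̃ = [A_1+E_1 … A_k+E_k] be a perturbation with E_j ∈ ℝ^{m×n}, and let r = rank(M). Then for all 1 ≤ i ≤ r: |σ_i(M̃) − σ_i(M)| ≤ (1/σ_i(M)) Σ_{j=1}^k (2‖A_j‖₂‖E_j‖₂ + ‖E_j‖₂²). -/
open Matrix

/-- The `i`-th largest singular value of a real matrix `B`, i.e. the square root of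
the `i`-th largest eigenvalue of `B Bᴴ`. -/
noncomputable def singularValue {m : ℕ} {N : Type*} [Fintype N]
    (B : Matrix (Fin m) N ℝ) (i : Fin m) : ℝ :=
  Real.sqrt ((Matrix.isHermitian_mul_conjTranspose_self B).eigenvalues
    (Tuple.sort (Matrix.isHermitian_mul_conjTranspose_self B).eigenvalues i.rev))

/-- The spectral norm of a real matrix: the operator norm of the induced linear map
between Euclidean spaces (equal to the largest singular value). -/
noncomputable def specNorm {m : ℕ} {N : Type*} [Fintype N] [DecidableEq N]
    (B : Matrix (Fin m) N ℝ) : ℝ :=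
  ‖(Matrix.toEuclideanLin B).toContinuousLinearMap‖

local notation "⟪" x ", " y "⟫" => inner (𝕜 := ℝ) x y

section Aux

lemma specNorm_nonneg' {m : ℕ} {N : Type*} [Fintype N] [DecidableEq N]
    (B : Matrix (Fin m) N ℝ) : 0 ≤ specNorm B := norm_nonneg _

lemma norm_toEuclideanLin_le {m : ℕ} {N : Type*} [Fintype N] [DecidableEq N]
    (B : Matrix (Fin m) N ℝ) (x : EuclideanSpace ℝ N) :
    ‖Matrix.toEuclideanLin B x‖ ≤ specNorm B * ‖x‖ := by
  have := (Matrix.toEuclideanLin B).toContinuousLinearMap.le_opNorm x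
  simpa [specNorm] using this

lemma toEuclideanLin_mul' {m n : ℕ} {N : Type*} [Fintype N] [DecidableEq N]
    (B : Matrix (Fin m) (Fin n) ℝ) (C : Matrix (Fin n) N ℝ) :
    Matrix.toEuclideanLin (B * C) =
      (Matrix.toEuclideanLin B).comp (Matrix.toEuclideanLin C) := by
  rw [Matrix.toEuclideanLin_eq_toLin, Matrix.toLin_mul _ (PiLp.basisFun 2 ℝ (Fin n)) _]
  rfl

lemma specNorm_mul_le {m n : ℕ} {N : Type*} [Fintype N] [DecidableEq N]
    (B : Matrix (Fin m) (Fin n) ℝ) (C : Matrix (Fin n) N ℝ) :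
    specNorm (B * C) ≤ specNorm B * specNorm C := by
  have h : (Matrix.toEuclideanLin (B * C)).toContinuousLinearMap =
      (Matrix.toEuclideanLin B).toContinuousLinearMap.comp
        (Matrix.toEuclideanLin C).toContinuousLinearMap := by
    ext x
    simp [toEuclideanLin_mul']
  rw [specNorm, h]
  exact ContinuousLinearMap.opNorm_comp_le _ _

lemma specNorm_conjTranspose {m n : ℕ} (B : Matrix (Fin m) (Fin n) ℝ) :
    specNorm Bᴴ = specNorm B := by
  rw [specNorm, Matrix.toEuclideanLin_conjTranspose_eq_adjoint,
    LinearMap.adjoint_toContinuousLinearMap]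
  exact (ContinuousLinearMap.adjoint : _ ≃ₗᵢ⋆[ℝ] _).norm_map _

lemma specNorm_add_le {m : ℕ} {N : Type*} [Fintype N] [DecidableEq N]
    (B C : Matrix (Fin m) N ℝ) : specNorm (B + C) ≤ specNorm B + specNorm C := by
  have h : (Matrix.toEuclideanLin (B + C)).toContinuousLinearMap =
      (Matrix.toEuclideanLin B).toContinuousLinearMap +
        (Matrix.toEuclideanLin C).toContinuousLinearMap := by
    ext x; simp
  rw [specNorm, h]
  exact norm_add_le _ _

lemma specNorm_sub_comm {m : ℕ} {N : Type*} [Fintype N] [DecidableEq N]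
    (B C : Matrix (Fin m) N ℝ) : specNorm (B - C) = specNorm (C - B) := by
  have h : (Matrix.toEuclideanLin (B - C)).toContinuousLinearMap =
      -(Matrix.toEuclideanLin (C - B)).toContinuousLinearMap := by
    ext x
    simp only [LinearMap.coe_toContinuousLinearMap', ContinuousLinearMap.neg_apply]
    rw [show B - C = -(C - B) from (neg_sub C B).symm, map_neg]
    rfl
  rw [specNorm, h, norm_neg, specNorm]

lemma specNorm_sum_le {m : ℕ} {N : Type*} [Fintype N] [DecidableEq N] {k : ℕ}
    (D : Fin k → Matrix (Fin m) N ℝ) :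
    specNorm (∑ j, D j) ≤ ∑ j, specNorm (D j) := by
  induction k with
  | zero =>
    simp only [Finset.univ_eq_empty, Finset.sum_empty]
    have h : (Matrix.toEuclideanLin (0 : Matrix (Fin m) N ℝ)).toContinuousLinearMap = 0 := by
      ext x; simp
    rw [specNorm, h, norm_zero]
  | succ k ih =>
    rw [Fin.sum_univ_succ, Fin.sum_univ_succ]
    exact (specNorm_add_le _ _).trans (by linarith [ih (fun j => D j.succ)])

lemma rayleigh_upper {m : ℕ} (H : Matrix (Fin m) (Fin m) ℝ)
    (b : OrthonormalBasis (Fin m) ℝ (EuclideanSpace ℝ (Fin m))) (μ : Fin m → ℝ)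
    (hHb : ∀ j, Matrix.toEuclideanLin H (b j) = μ j • b j)
    (S : Finset (Fin m)) (t : ℝ) (ht : ∀ j ∈ S, μ j ≤ t)
    (x : EuclideanSpace ℝ (Fin m)) (hx : x ∈ Submodule.span ℝ (⇑b '' ↑S)) :
    ⟪x, Matrix.toEuclideanLin H x⟫ ≤ t * ‖x‖ ^ 2 := by
  have hc0 : ∀ j ∉ S, b.repr x j = 0 := by
    intro j hj
    rw [b.repr_apply_apply]
    induction hx using Submodule.span_induction with
    | mem y hy =>
      obtain ⟨l, hl, rfl⟩ := hy
      have hne : j ≠ l := by rintro rfl; exact hj hl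
      exact b.orthonormal.2 hne
    | zero => simp
    | add y z _ _ hy hz => rw [inner_add_right, hy, hz]; ring
    | smul a y _ hy => rw [inner_smul_right, hy]; ring
  have hxs : ∑ j, b.repr x j • b j = x := b.sum_repr x
  have hHx : ⟪x, Matrix.toEuclideanLin H x⟫ = ∑ j, μ j * b.repr x j ^ 2 := by
    have hsum : Matrix.toEuclideanLin H x = ∑ j, (μ j * b.repr x j) • b j := by
      conv_lhs => rw [← hxs]
      rw [map_sum]
      refine Finset.sum_congr rfl fun j _ => ?_
      rw [_root_.map_smul, hHb j, smul_smul, mul_comm]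
    rw [hsum, inner_sum]
    simp only [real_inner_smul_right]
    refine Finset.sum_congr rfl fun j _ => ?_
    have hbx : ⟪x, b j⟫ = b.repr x j := by rw [real_inner_comm, ← b.repr_apply_apply]
    rw [hbx]; ring
  have hnx : ‖x‖ ^ 2 = ∑ j, b.repr x j ^ 2 := by
    rw [← real_inner_self_eq_norm_sq]
    conv_lhs => rw [← hxs]
    rw [sum_inner]
    simp only [hxs]
    refine Finset.sum_congr rfl fun j _ => ?_
    rw [real_inner_smul_left]
    have hbx : ⟪b j, x⟫ = b.repr x j := (b.repr_apply_apply x j).symm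
    rw [hbx]; ring
  rw [hHx, hnx, Finset.mul_sum]
  refine Finset.sum_le_sum fun j _ => ?_
  by_cases hj : j ∈ S
  · exact mul_le_mul_of_nonneg_right (ht j hj) (sq_nonneg _)
  · rw [hc0 j hj]; simp

lemma finrank_span_orthonormal {m : ℕ} {b : Fin m → EuclideanSpace ℝ (Fin m)}
    (hb : Orthonormal ℝ b) (S : Finset (Fin m)) :
    Module.finrank ℝ (Submodule.span ℝ (b '' ↑S)) = S.card := by
  have hli : LinearIndependent ℝ (fun j : S => b j) :=
    hb.linearIndependent.comp _ Subtype.val_injective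
  have hr : Set.range (fun j : S => b j) = b '' ↑S := by ext y; simp
  rw [← hr, finrank_span_eq_card hli, Fintype.card_coe]

/-- The eigenvector basis sorted so that eigenvalues are in decreasing order. -/
noncomputable def sortedBasis {m : ℕ} {H : Matrix (Fin m) (Fin m) ℝ} (hH : H.IsHermitian) :
    OrthonormalBasis (Fin m) ℝ (EuclideanSpace ℝ (Fin m)) :=
  hH.eigenvectorBasis.reindex (Fin.revPerm.trans (Tuple.sort hH.eigenvalues)).symm

/-- The `j`-th largest eigenvalue of a Hermitian matrix. -/
noncomputable def sortedEig {m : ℕ} {H : Matrix (Fin m) (Fin m) ℝ} (hH : H.IsHermitian)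
    (j : Fin m) : ℝ :=
  hH.eigenvalues (Tuple.sort hH.eigenvalues j.rev)

lemma sortedBasis_apply {m : ℕ} {H : Matrix (Fin m) (Fin m) ℝ} (hH : H.IsHermitian)
    (j : Fin m) : sortedBasis hH j = hH.eigenvectorBasis (Tuple.sort hH.eigenvalues j.rev) := by
  rw [sortedBasis, OrthonormalBasis.reindex_apply]
  rfl

lemma sortedEig_antitone {m : ℕ} {H : Matrix (Fin m) (Fin m) ℝ} (hH : H.IsHermitian) :
    Antitone (sortedEig hH) := by
  intro a c hac
  exact Tuple.monotone_sort hH.eigenvalues (Fin.rev_le_rev.mpr hac)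

lemma toEuclideanLin_sortedBasis {m : ℕ} {H : Matrix (Fin m) (Fin m) ℝ} (hH : H.IsHermitian)
    (j : Fin m) :
    Matrix.toEuclideanLin H (sortedBasis hH j) = sortedEig hH j • sortedBasis hH j := by
  rw [sortedBasis_apply, sortedEig]
  set l := Tuple.sort hH.eigenvalues j.rev
  have := hH.mulVec_eigenvectorBasis l
  apply (WithLp.equiv 2 (Fin m → ℝ)).injective
  ext r
  exact congrFun this r

set_option synthInstance.maxHeartbeats 1000000 in
set_option maxHeartbeats 1000000 in
/-- One-sided Weyl inequality for sorted eigenvalues of Hermitian matrices. -/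
lemma weyl_aux {m : ℕ} {H H' : Matrix (Fin m) (Fin m) ℝ}
    (hH : H.IsHermitian) (hH' : H'.IsHermitian) (i : Fin m) :
    sortedEig hH' i ≤ sortedEig hH i + specNorm (H' - H) := by
  set b := sortedBasis hH
  set b' := sortedBasis hH'
  set U := Submodule.span ℝ (⇑b' '' ↑(Finset.Iic i))
  set W := Submodule.span ℝ (⇑b '' ↑(Finset.Ici i))
  have hU : Module.finrank ℝ U = (i : ℕ) + 1 := by
    rw [finrank_span_orthonormal b'.orthonormal, Fin.card_Iic]
  have hW : Module.finrank ℝ W = m - (i : ℕ) := by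
    rw [finrank_span_orthonormal b.orthonormal, Fin.card_Ici]
  have hpos : 0 < Module.finrank ℝ ↥(U ⊓ W) := by
    have h1 := Submodule.finrank_sup_add_finrank_inf_eq U W
    have h2 : Module.finrank ℝ ↥(U ⊔ W) ≤ m := by
      have := Submodule.finrank_le (U ⊔ W)
      rwa [finrank_euclideanSpace_fin] at this
    have him : (i : ℕ) < m := i.isLt
    omega
  obtain ⟨⟨x, hxUW⟩, hxne⟩ := (Module.finrank_pos_iff_exists_ne_zero).mp hpos
  have hxU : x ∈ U := hxUW.1
  have hxW : x ∈ W := hxUW.2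
  have hx0 : x ≠ 0 := fun h => hxne (Subtype.ext h)
  have hnx : (0:ℝ) < ‖x‖ ^ 2 := pow_pos (norm_pos_iff.mpr hx0) 2
  have h1 : sortedEig hH' i * ‖x‖ ^ 2 ≤ ⟪x, Matrix.toEuclideanLin H' x⟫ := by
    have hneg : ∀ j, Matrix.toEuclideanLin (-H') (b' j) = (-sortedEig hH' j) • b' j := by
      intro j
      rw [map_neg, LinearMap.neg_apply, toEuclideanLin_sortedBasis hH' j, neg_smul]
    have := rayleigh_upper (-H') b' _ hneg (Finset.Iic i) (-sortedEig hH' i)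
      (fun j hj => neg_le_neg (sortedEig_antitone hH' (Finset.mem_Iic.mp hj))) x hxU
    rw [map_neg, LinearMap.neg_apply, inner_neg_right] at this
    linarith
  have h2 : ⟪x, Matrix.toEuclideanLin H x⟫ ≤ sortedEig hH i * ‖x‖ ^ 2 :=
    rayleigh_upper H b _ (toEuclideanLin_sortedBasis hH) (Finset.Ici i) _
      (fun j hj => sortedEig_antitone hH (Finset.mem_Ici.mp hj)) x hxW
  have h3 : ⟪x, Matrix.toEuclideanLin H' x⟫ - ⟪x, Matrix.toEuclideanLin H x⟫
      ≤ specNorm (H' - H) * ‖x‖ ^ 2 := by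
    have hsub : Matrix.toEuclideanLin (H' - H) x
        = Matrix.toEuclideanLin H' x - Matrix.toEuclideanLin H x := by
      rw [map_sub, LinearMap.sub_apply]
    have hle : ⟪x, Matrix.toEuclideanLin (H' - H) x⟫ ≤ ‖x‖ * ‖Matrix.toEuclideanLin (H' - H) x‖ :=
      real_inner_le_norm _ _
    have hbd : ‖Matrix.toEuclideanLin (H' - H) x‖ ≤ specNorm (H' - H) * ‖x‖ :=
      norm_toEuclideanLin_le _ x
    have := hle.trans (by nlinarith [norm_nonneg x] :
      ‖x‖ * ‖Matrix.toEuclideanLin (H' - H) x‖ ≤ specNorm (H' - H) * ‖x‖ ^ 2)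
    rw [hsub, inner_sub_right] at this
    linarith
  nlinarith

/-- Two-sided Weyl inequality. -/
lemma weyl {m : ℕ} {H H' : Matrix (Fin m) (Fin m) ℝ}
    (hH : H.IsHermitian) (hH' : H'.IsHermitian) (i : Fin m) :
    |sortedEig hH' i - sortedEig hH i| ≤ specNorm (H' - H) := by
  rw [abs_sub_le_iff]
  constructor
  · linarith [weyl_aux hH hH' i]
  · have := weyl_aux hH' hH i
    rw [specNorm_sub_comm] at this
    linarith

lemma sortedEig_pos {m : ℕ} {N : Type*} [Fintype N] [DecidableEq N]
    (B : Matrix (Fin m) N ℝ) (i : Fin m) (hi : (i:ℕ) < B.rank) :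
    0 < sortedEig (Matrix.isHermitian_mul_conjTranspose_self B) i := by
  set hB := Matrix.isHermitian_mul_conjTranspose_self B
  set μ := hB.eigenvalues with hμ
  have hnn : ∀ j, 0 ≤ μ j := fun j => Matrix.eigenvalues_self_mul_conjTranspose_nonneg B j
  have hrank : B.rank = Fintype.card {j // μ j ≠ 0} := by
    rw [← Matrix.rank_self_mul_conjTranspose B, hB.rank_eq_card_non_zero_eigs]
  set g : Fin m → ℝ := fun j => μ (Tuple.sort μ j) with hg
  have hgcard : Fintype.card {j // g j ≠ 0} = Fintype.card {j // μ j ≠ 0} :=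
    Fintype.card_congr ((Tuple.sort μ).subtypeEquiv (fun j => Iff.rfl))
  have hmono : Monotone g := Tuple.monotone_sort μ
  rcases lt_or_ge 0 (g i.rev) with h | h
  · exact h
  exfalso
  have hsub : (Finset.univ.filter (fun j => g j ≠ 0)) ⊆ Finset.Ioi i.rev := by
    intro j hj
    rw [Finset.mem_filter] at hj
    rw [Finset.mem_Ioi]
    by_contra hle
    push_neg at hle
    exact hj.2 (le_antisymm ((hmono hle).trans h) (hnn _))
  have hcard := Finset.card_le_card hsub
  rw [Fin.card_Ioi] at hcard
  have h1 : Fintype.card {j // g j ≠ 0} = (Finset.univ.filter (fun j => g j ≠ 0)).card :=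
    Fintype.card_subtype _
  have hrev : (i.rev : ℕ) = m - ((i : ℕ) + 1) := Fin.val_rev i
  have him : (i : ℕ) < m := i.isLt
  omega

lemma concat_mul_conjTranspose {m n k : ℕ} (A : Fin k → Matrix (Fin m) (Fin n) ℝ) :
    (Matrix.of fun i (p : Fin k × Fin n) => A p.1 i p.2) *
      (Matrix.of fun i (p : Fin k × Fin n) => A p.1 i p.2)ᴴ
      = ∑ j, A j * (A j)ᴴ := by
  ext a c
  simp [Matrix.sum_apply, Matrix.mul_apply, Matrix.conjTranspose_apply, Fintype.sum_prod_type]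

end Aux

/-- Singular value perturbation for concatenated matrices (nonzero singular values):
for `M = [A_1 … A_k]`, `M̃ = [A_1+E_1 … A_k+E_k]` and `i` within the rank of `M`,
`|σ_i(M̃) − σ_i(M)| ≤ (1/σ_i(M)) Σ_j (2‖A_j‖₂‖E_j‖₂ + ‖E_j‖₂²)`. -/
theorem singularValue_perturbation_concat {m n k : ℕ}
    (A E : Fin k → Matrix (Fin m) (Fin n) ℝ) (i : Fin m)
    (hi : (i : ℕ) < (Matrix.of fun i (p : Fin k × Fin n) => A p.1 i p.2).rank) :
    |singularValue (Matrix.of fun i (p : Fin k × Fin n) => (A p.1 + E p.1) i p.2) i -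
       singularValue (Matrix.of fun i (p : Fin k × Fin n) => A p.1 i p.2) i|
      ≤ (1 / singularValue (Matrix.of fun i (p : Fin k × Fin n) => A p.1 i p.2) i) *
        ∑ j : Fin k, (2 * specNorm (A j) * specNorm (E j) + specNorm (E j) ^ 2) := by
  set M : Matrix (Fin m) (Fin k × Fin n) ℝ := Matrix.of fun i (p : Fin k × Fin n) => A p.1 i p.2
    with hMdef
  set M' : Matrix (Fin m) (Fin k × Fin n) ℝ :=
    Matrix.of fun i (p : Fin k × Fin n) => (A p.1 + E p.1) i p.2 with hM'def
  set hM := Matrix.isHermitian_mul_conjTranspose_self M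
  set hM' := Matrix.isHermitian_mul_conjTranspose_self M'
  set a : ℝ := sortedEig hM i with ha_def
  set a' : ℝ := sortedEig hM' i with ha'_def
  have ha : 0 < a := sortedEig_pos M i hi
  have ha0 : 0 ≤ a := ha.le
  have ha' : 0 ≤ a' := by
    rw [ha'_def, sortedEig]
    exact Matrix.eigenvalues_self_mul_conjTranspose_nonneg M' _
  have hsM : singularValue M i = Real.sqrt a := rfl
  have hsM' : singularValue M' i = Real.sqrt a' := rfl
  set R : ℝ := ∑ j : Fin k, (2 * specNorm (A j) * specNorm (E j) + specNorm (E j) ^ 2) with hR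
  -- step 1: |a' - a| ≤ R
  have hdiff : M' * M'ᴴ - M * Mᴴ
      = ∑ j, (A j * (E j)ᴴ + (E j * (A j)ᴴ + E j * (E j)ᴴ)) := by
    have h1 : M * Mᴴ = ∑ j, A j * (A j)ᴴ := concat_mul_conjTranspose A
    have h2 : M' * M'ᴴ = ∑ j, (A j + E j) * (A j + E j)ᴴ := concat_mul_conjTranspose (A + E)
    rw [h1, h2, ← Finset.sum_sub_distrib]
    refine Finset.sum_congr rfl fun j _ => ?_
    rw [conjTranspose_add, Matrix.mul_add, Matrix.add_mul, Matrix.add_mul]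
    abel
  have hWR : specNorm (M' * M'ᴴ - M * Mᴴ) ≤ R := by
    rw [hdiff]
    refine (specNorm_sum_le _).trans ?_
    rw [hR]
    refine Finset.sum_le_sum fun j _ => ?_
    have e1 : specNorm (A j * (E j)ᴴ) ≤ specNorm (A j) * specNorm (E j) := by
      have := specNorm_mul_le (A j) (E j)ᴴ
      rwa [specNorm_conjTranspose] at this
    have e2 : specNorm (E j * (A j)ᴴ) ≤ specNorm (E j) * specNorm (A j) := by
      have := specNorm_mul_le (E j) (A j)ᴴ
      rwa [specNorm_conjTranspose] at this
    have e3 : specNorm (E j * (E j)ᴴ) ≤ specNorm (E j) * specNorm (E j) := by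
      have := specNorm_mul_le (E j) (E j)ᴴ
      rwa [specNorm_conjTranspose] at this
    calc specNorm (A j * (E j)ᴴ + (E j * (A j)ᴴ + E j * (E j)ᴴ))
        ≤ specNorm (A j * (E j)ᴴ) + specNorm (E j * (A j)ᴴ + E j * (E j)ᴴ) :=
          specNorm_add_le _ _
      _ ≤ specNorm (A j * (E j)ᴴ) + (specNorm (E j * (A j)ᴴ) + specNorm (E j * (E j)ᴴ)) := by
          linarith [specNorm_add_le (E j * (A j)ᴴ) (E j * (E j)ᴴ)]
      _ ≤ 2 * specNorm (A j) * specNorm (E j) + specNorm (E j) ^ 2 := by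
          rw [sq]; linarith
  have hW : |a' - a| ≤ R := (weyl hM hM' i).trans hWR
  -- step 2: arithmetic
  rw [hsM, hsM']
  have hs : 0 < Real.sqrt a := Real.sqrt_pos.mpr ha
  have hs' : 0 ≤ Real.sqrt a' := Real.sqrt_nonneg _
  have hprod : (Real.sqrt a' - Real.sqrt a) * (Real.sqrt a' + Real.sqrt a) = a' - a := by
    have : (Real.sqrt a' - Real.sqrt a) * (Real.sqrt a' + Real.sqrt a)
        = Real.sqrt a' ^ 2 - Real.sqrt a ^ 2 := by ring
    rw [this, Real.sq_sqrt ha', Real.sq_sqrt ha0]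
  have hkey : |Real.sqrt a' - Real.sqrt a| * Real.sqrt a ≤ |a' - a| := by
    calc |Real.sqrt a' - Real.sqrt a| * Real.sqrt a
        ≤ |Real.sqrt a' - Real.sqrt a| * (Real.sqrt a' + Real.sqrt a) := by
          apply mul_le_mul_of_nonneg_left (by linarith) (abs_nonneg _)
      _ = |(Real.sqrt a' - Real.sqrt a) * (Real.sqrt a' + Real.sqrt a)| := by
          rw [abs_mul, abs_of_nonneg (by linarith : (0:ℝ) ≤ Real.sqrt a' + Real.sqrt a)]
      _ = |a' - a| := by rw [hprod]
  rw [one_div, inv_mul_eq_div, le_div_iff₀ hs]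
  exact hkey.trans hW
end

section
/- Fix a task index t ∈ {1,…,k} and matrices ΔW_1,…,ΔW_k ∈ ℝ^{m×n}. Let M ∈ ℝ^{m×(kn)} be the horizontal concatenation of k copies of ΔW_t, let M̃ = [ΔW_1 … ΔW_k], let E_j = ΔW_j − ΔW_t, and let r = rank(M). Then for all 1 ≤ i ≤ r: |σ_i(M̃) − √k·σ_i(ΔW_t)| ≤ (1/(√k·σ_i(ΔW_t))) Σ_{j=1}^k (2‖ΔW_t‖₂‖E_j‖₂ + ‖E_j‖₂²). -/
open Matrix

open scoped Matrix.Norms.L2Operator RealInnerProductSpace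

namespace SVBoundAux

variable {m n : ℕ}

noncomputable def qf (A : Matrix (Fin m) (Fin m) ℝ) (x : EuclideanSpace ℝ (Fin m)) : ℝ :=
  ⟪x, Matrix.toEuclideanLin A x⟫

lemma qf_sub (A B : Matrix (Fin m) (Fin m) ℝ) (x : EuclideanSpace ℝ (Fin m)) :
    qf (A - B) x = qf A x - qf B x := by
  simp [qf, map_sub, inner_sub_right]

lemma qf_smul (c : ℝ) (A : Matrix (Fin m) (Fin m) ℝ) (x : EuclideanSpace ℝ (Fin m)) :
    qf (c • A) x = c * qf A x := by
  simp [qf, _root_.map_smul, inner_smul_right]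

lemma abs_qf_le (A : Matrix (Fin m) (Fin m) ℝ) (x : EuclideanSpace ℝ (Fin m)) :
    |qf A x| ≤ ‖A‖ * ‖x‖ ^ 2 := by
  have h1 : |qf A x| ≤ ‖x‖ * ‖Matrix.toEuclideanLin A x‖ := abs_real_inner_le_norm _ _
  have h2 : ‖Matrix.toEuclideanLin A x‖ ≤ ‖A‖ * ‖x‖ := A.l2_opNorm_mulVec x
  calc |qf A x| ≤ ‖x‖ * ‖Matrix.toEuclideanLin A x‖ := h1
    _ ≤ ‖x‖ * (‖A‖ * ‖x‖) := mul_le_mul_of_nonneg_left h2 (norm_nonneg x)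
    _ = ‖A‖ * ‖x‖ ^ 2 := by ring

lemma toEuclideanLin_eigenvectorBasis {A : Matrix (Fin m) (Fin m) ℝ} (hA : A.IsHermitian)
    (j : Fin m) :
    Matrix.toEuclideanLin A (hA.eigenvectorBasis j) =
      hA.eigenvalues j • hA.eigenvectorBasis j := by
  apply (WithLp.equiv 2 (Fin m → ℝ)).injective
  simpa [Matrix.piLp_ofLp_toEuclideanLin] using hA.mulVec_eigenvectorBasis j

lemma qf_eq_sum {A : Matrix (Fin m) (Fin m) ℝ} (hA : A.IsHermitian)
    (x : EuclideanSpace ℝ (Fin m)) :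
    qf A x = ∑ j, hA.eigenvalues j * ⟪hA.eigenvectorBasis j, x⟫ ^ 2 := by
  have hsym : (Matrix.toEuclideanLin A).IsSymmetric :=
    Matrix.isHermitian_iff_isSymmetric.mp hA
  have key : ∀ j, ⟪hA.eigenvectorBasis j, Matrix.toEuclideanLin A x⟫
      = hA.eigenvalues j * ⟪hA.eigenvectorBasis j, x⟫ := by
    intro j
    rw [← hsym (hA.eigenvectorBasis j) x, toEuclideanLin_eigenvectorBasis hA j,
      real_inner_smul_left]
  have := (hA.eigenvectorBasis.sum_inner_mul_inner x (Matrix.toEuclideanLin A x)).symm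
  rw [qf, this]
  refine Finset.sum_congr rfl fun j _ => ?_
  rw [key j, real_inner_comm x]
  ring

lemma norm_sq_eq_sum {A : Matrix (Fin m) (Fin m) ℝ} (hA : A.IsHermitian)
    (x : EuclideanSpace ℝ (Fin m)) :
    ‖x‖ ^ 2 = ∑ j, ⟪hA.eigenvectorBasis j, x⟫ ^ 2 := by
  have := (hA.eigenvectorBasis.sum_inner_mul_inner x x).symm
  rw [real_inner_self_eq_norm_sq] at this
  rw [this]
  refine Finset.sum_congr rfl fun j _ => ?_
  rw [real_inner_comm x]
  ring

/-- Span of the eigenvectors whose sorted index lies in `s`. -/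
noncomputable def eigSpan {A : Matrix (Fin m) (Fin m) ℝ} (hA : A.IsHermitian)
    (s : Finset (Fin m)) : Submodule ℝ (EuclideanSpace ℝ (Fin m)) :=
  Submodule.span ℝ ((fun j => hA.eigenvectorBasis (Tuple.sort hA.eigenvalues j)) '' s)

lemma finrank_eigSpan {A : Matrix (Fin m) (Fin m) ℝ} (hA : A.IsHermitian)
    (s : Finset (Fin m)) : Module.finrank ℝ (eigSpan hA s) = s.card := by
  classical
  set f : Fin m → EuclideanSpace ℝ (Fin m) :=
    fun j => hA.eigenvectorBasis (Tuple.sort hA.eigenvalues j) with hf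
  have hli : LinearIndependent ℝ (fun j : s => f j) :=
    (hA.eigenvectorBasis.orthonormal.linearIndependent.comp
      (fun j : s => Tuple.sort hA.eigenvalues j)
      ((Tuple.sort hA.eigenvalues).injective.comp Subtype.val_injective))
  have hrange : Set.range (fun j : s => f j) = f '' s := by
    ext y; simp [Set.mem_image, Set.mem_range]
  have := finrank_span_eq_card hli
  rw [hrange] at this
  rw [eigSpan, ← hf, this, Fintype.card_coe]

lemma inner_eq_zero_of_mem_eigSpan {A : Matrix (Fin m) (Fin m) ℝ} (hA : A.IsHermitian)
    (s : Finset (Fin m)) {x : EuclideanSpace ℝ (Fin m)} (hx : x ∈ eigSpan hA s)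
    {j : Fin m} (hj : j ∉ s) :
    ⟪hA.eigenvectorBasis (Tuple.sort hA.eigenvalues j), x⟫ = 0 := by
  induction hx using Submodule.span_induction with
  | mem y hy =>
    obtain ⟨j', hj', rfl⟩ := hy
    refine hA.eigenvectorBasis.orthonormal.2 fun h => hj ?_
    have : j = j' := (Tuple.sort hA.eigenvalues).injective h
    simpa [this] using hj'
  | zero => simp
  | add y z _ _ hy hz => rw [inner_add_right, hy, hz, add_zero]
  | smul c y _ hy => rw [inner_smul_right, hy, mul_zero]

lemma exists_subspace_lo {A : Matrix (Fin m) (Fin m) ℝ} (hA : A.IsHermitian) (a : Fin m) :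
    ∃ T : Submodule ℝ (EuclideanSpace ℝ (Fin m)), (a : ℕ) + 1 ≤ Module.finrank ℝ T ∧
      ∀ x ∈ T, qf A x ≤ hA.eigenvalues (Tuple.sort hA.eigenvalues a) * ‖x‖ ^ 2 := by
  classical
  refine ⟨eigSpan hA (Finset.Iic a), by rw [finrank_eigSpan, Fin.card_Iic], fun x hx => ?_⟩
  set σ := Tuple.sort hA.eigenvalues
  have h1 : qf A x = ∑ j, hA.eigenvalues (σ j) * ⟪hA.eigenvectorBasis (σ j), x⟫ ^ 2 := by
    rw [qf_eq_sum hA x, ← Equiv.sum_comp σ (fun j => hA.eigenvalues j *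
      ⟪hA.eigenvectorBasis j, x⟫ ^ 2)]
  have h2 : ‖x‖ ^ 2 = ∑ j, ⟪hA.eigenvectorBasis (σ j), x⟫ ^ 2 := by
    rw [norm_sq_eq_sum hA x, ← Equiv.sum_comp σ (fun j => ⟪hA.eigenvectorBasis j, x⟫ ^ 2)]
  rw [h1, h2, Finset.mul_sum]
  refine Finset.sum_le_sum fun j _ => ?_
  by_cases hj : j ∈ Finset.Iic a
  · exact mul_le_mul_of_nonneg_right (Tuple.monotone_sort hA.eigenvalues
      (Finset.mem_Iic.mp hj)) (sq_nonneg _)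
  · rw [inner_eq_zero_of_mem_eigSpan hA _ hx hj]
    simp

lemma exists_subspace_hi {A : Matrix (Fin m) (Fin m) ℝ} (hA : A.IsHermitian) (a : Fin m) :
    ∃ T : Submodule ℝ (EuclideanSpace ℝ (Fin m)), m - (a : ℕ) ≤ Module.finrank ℝ T ∧
      ∀ x ∈ T, hA.eigenvalues (Tuple.sort hA.eigenvalues a) * ‖x‖ ^ 2 ≤ qf A x := by
  classical
  refine ⟨eigSpan hA (Finset.Ici a), by rw [finrank_eigSpan, Fin.card_Ici], fun x hx => ?_⟩
  set σ := Tuple.sort hA.eigenvalues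
  have h1 : qf A x = ∑ j, hA.eigenvalues (σ j) * ⟪hA.eigenvectorBasis (σ j), x⟫ ^ 2 := by
    rw [qf_eq_sum hA x, ← Equiv.sum_comp σ (fun j => hA.eigenvalues j *
      ⟪hA.eigenvectorBasis j, x⟫ ^ 2)]
  have h2 : ‖x‖ ^ 2 = ∑ j, ⟪hA.eigenvectorBasis (σ j), x⟫ ^ 2 := by
    rw [norm_sq_eq_sum hA x, ← Equiv.sum_comp σ (fun j => ⟪hA.eigenvectorBasis j, x⟫ ^ 2)]
  rw [h1, h2, Finset.mul_sum]
  refine Finset.sum_le_sum fun j _ => ?_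
  by_cases hj : j ∈ Finset.Ici a
  · exact mul_le_mul_of_nonneg_right (Tuple.monotone_sort hA.eigenvalues
      (Finset.mem_Ici.mp hj)) (sq_nonneg _)
  · rw [inner_eq_zero_of_mem_eigSpan hA _ hx hj]
    simp

lemma exists_ne_zero_mem_inter (S T : Submodule ℝ (EuclideanSpace ℝ (Fin m)))
    (h : m + 1 ≤ Module.finrank ℝ S + Module.finrank ℝ T) :
    ∃ x : EuclideanSpace ℝ (Fin m), x ≠ 0 ∧ x ∈ S ∧ x ∈ T := by
  have hsum := Submodule.finrank_sup_add_finrank_inf_eq S T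
  have hle : Module.finrank ℝ ↥(S ⊔ T) ≤ m := by
    simpa [finrank_euclideanSpace_fin] using Submodule.finrank_le (S ⊔ T)
  have hpos : 0 < Module.finrank ℝ ↥(S ⊓ T) := by omega
  have : Nontrivial ↥(S ⊓ T) := Module.nontrivial_of_finrank_pos hpos
  obtain ⟨y, hy⟩ := exists_ne (0 : ↥(S ⊓ T))
  exact ⟨y.1, by simpa [Submodule.coe_eq_zero] using hy,
    (Submodule.mem_inf.mp y.2).1, (Submodule.mem_inf.mp y.2).2⟩

lemma weyl_le {A : Matrix (Fin m) (Fin m) ℝ} (hA : A.IsHermitian) (a : Fin m)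
    (B : Matrix (Fin m) (Fin m) ℝ) (b : ℝ) (T : Submodule ℝ (EuclideanSpace ℝ (Fin m)))
    (hdim : (a : ℕ) + 1 ≤ Module.finrank ℝ T)
    (hq : ∀ x ∈ T, qf B x ≤ b * ‖x‖ ^ 2) :
    hA.eigenvalues (Tuple.sort hA.eigenvalues a) ≤ b + ‖A - B‖ := by
  obtain ⟨S, hS, hSq⟩ := exists_subspace_hi hA a
  have ha : (a : ℕ) < m := a.isLt
  obtain ⟨x, hx0, hxS, hxT⟩ := exists_ne_zero_mem_inter S T (by omega)
  have hx2 : (0:ℝ) < ‖x‖ ^ 2 := by have := norm_pos_iff.mpr hx0; positivity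
  have h1 := hSq x hxS
  have h2 := hq x hxT
  have h3 : qf A x = qf B x + qf (A - B) x := by rw [qf_sub]; ring
  have : hA.eigenvalues (Tuple.sort hA.eigenvalues a) * ‖x‖ ^ 2 ≤ (b + ‖A - B‖) * ‖x‖ ^ 2 := by
    nlinarith [le_abs_self (qf (A-B) x), abs_qf_le (A-B) x]
  exact le_of_mul_le_mul_right this hx2

lemma weyl_ge {A : Matrix (Fin m) (Fin m) ℝ} (hA : A.IsHermitian) (a : Fin m)
    (B : Matrix (Fin m) (Fin m) ℝ) (b : ℝ) (T : Submodule ℝ (EuclideanSpace ℝ (Fin m)))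
    (hdim : m - (a : ℕ) ≤ Module.finrank ℝ T)
    (hq : ∀ x ∈ T, b * ‖x‖ ^ 2 ≤ qf B x) :
    b ≤ hA.eigenvalues (Tuple.sort hA.eigenvalues a) + ‖A - B‖ := by
  obtain ⟨S, hS, hSq⟩ := exists_subspace_lo hA a
  have ha : (a : ℕ) < m := a.isLt
  obtain ⟨x, hx0, hxS, hxT⟩ := exists_ne_zero_mem_inter S T (by omega)
  have hx2 : (0:ℝ) < ‖x‖ ^ 2 := by have := norm_pos_iff.mpr hx0; positivity
  have h1 := hSq x hxS
  have h2 := hq x hxT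
  have h3 : qf (B - A) x = qf B x - qf A x := qf_sub _ _ _
  have h5 : ‖B - A‖ = ‖A - B‖ := norm_sub_rev _ _
  have : b * ‖x‖ ^ 2 ≤ (hA.eigenvalues (Tuple.sort hA.eigenvalues a) + ‖A - B‖) * ‖x‖ ^ 2 := by
    nlinarith [le_abs_self (qf (B-A) x), abs_qf_le (B-A) x]
  exact le_of_mul_le_mul_right this hx2

lemma term_bound (W X : Matrix (Fin m) (Fin n) ℝ) :
    ‖X * Xᴴ - W * Wᴴ‖ ≤ 2 * ‖W‖ * ‖X - W‖ + ‖X - W‖ ^ 2 := by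
  obtain ⟨E, rfl⟩ : ∃ E, X = W + E := ⟨X - W, (add_sub_cancel W X).symm⟩
  rw [show W + E - W = E by abel]
  have hexp : (W + E) * (W + E)ᴴ - W * Wᴴ = W * Eᴴ + (E * Wᴴ + E * Eᴴ) := by
    simp only [conjTranspose_add, Matrix.add_mul, Matrix.mul_add]
    abel
  rw [hexp]
  have h1 : ‖W * (E)ᴴ‖ ≤ ‖W‖ * ‖E‖ := by
    calc ‖W * (E)ᴴ‖ ≤ ‖W‖ * ‖(E)ᴴ‖ := Matrix.l2_opNorm_mul _ _
      _ = ‖W‖ * ‖E‖ := by rw [Matrix.l2_opNorm_conjTranspose]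
  have h2 : ‖(E) * Wᴴ‖ ≤ ‖E‖ * ‖W‖ := by
    calc ‖(E) * Wᴴ‖ ≤ ‖E‖ * ‖Wᴴ‖ := Matrix.l2_opNorm_mul _ _
      _ = ‖E‖ * ‖W‖ := by rw [Matrix.l2_opNorm_conjTranspose]
  have h3 : ‖(E) * (E)ᴴ‖ ≤ ‖E‖ * ‖E‖ := by
    calc ‖(E) * (E)ᴴ‖ ≤ ‖E‖ * ‖(E)ᴴ‖ := Matrix.l2_opNorm_mul _ _
      _ = ‖E‖ * ‖E‖ := by rw [Matrix.l2_opNorm_conjTranspose]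
  calc ‖W * (E)ᴴ + ((E) * Wᴴ + (E) * (E)ᴴ)‖
      ≤ ‖W * (E)ᴴ‖ + (‖(E) * Wᴴ‖ + ‖(E) * (E)ᴴ‖) :=
        (norm_add_le _ _).trans (by gcongr; exact norm_add_le _ _)
    _ ≤ ‖W‖ * ‖E‖ + (‖E‖ * ‖W‖ + ‖E‖ * ‖E‖) := by gcongr
    _ = 2 * ‖W‖ * ‖E‖ + ‖E‖ ^ 2 := by ring

lemma sorted_pos {C : Matrix (Fin m) (Fin m) ℝ} (hC : C.IsHermitian)
    (hnn : ∀ j, 0 ≤ hC.eigenvalues j) {i : Fin m} (hi : (i : ℕ) < C.rank) :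
    0 < hC.eigenvalues (Tuple.sort hC.eigenvalues i.rev) := by
  classical
  rcases (hnn _).lt_or_eq with h | h
  · exact h
  exfalso
  rw [hC.rank_eq_card_non_zero_eigs] at hi
  have hcong : Fintype.card {j // hC.eigenvalues j ≠ 0}
      = Fintype.card {j // hC.eigenvalues (Tuple.sort hC.eigenvalues j) ≠ 0} :=
    (Fintype.card_congr (Equiv.subtypeEquiv (Tuple.sort hC.eigenvalues)
      (fun j => Iff.rfl))).symm
  rw [hcong, Fintype.card_subtype] at hi
  have hsub : Finset.univ.filter (fun j => hC.eigenvalues (Tuple.sort hC.eigenvalues j) ≠ 0)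
      ⊆ Finset.Ioi i.rev := by
    intro j hj
    rw [Finset.mem_filter] at hj
    rw [Finset.mem_Ioi]
    by_contra hle
    push_neg at hle
    have hmono := Tuple.monotone_sort hC.eigenvalues hle
    exact hj.2 (le_antisymm (h ▸ hmono) (hnn _))
  have hcard := Finset.card_le_card hsub
  rw [Fin.card_Ioi] at hcard
  have hrev := Fin.val_rev i
  have him : (i : ℕ) < m := i.isLt
  omega

end SVBoundAux

set_option maxHeartbeats 1000000 in
/-- Bounded difference of weight delta concatenation: with `M` the `k`-fold
horizontal repetition of `ΔW_t`, `M̃ = [ΔW_1 … ΔW_k]`, `E_j = ΔW_j − ΔW_t` and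
`i` within the rank of `M`,
`|σ_i(M̃) − √k·σ_i(ΔW_t)| ≤ (1/(√k·σ_i(ΔW_t))) Σ_j (2‖ΔW_t‖₂‖E_j‖₂ + ‖E_j‖₂²)`. -/
theorem bounded_difference_of_concat {m n k : ℕ} (t : Fin k)
    (ΔW : Fin k → Matrix (Fin m) (Fin n) ℝ) (i : Fin m)
    (hi : (i : ℕ) < (Matrix.of fun i (p : Fin k × Fin n) => ΔW t i p.2).rank) :
    |singularValue (Matrix.of fun i (p : Fin k × Fin n) => ΔW p.1 i p.2) i -
       Real.sqrt k * singularValue (ΔW t) i|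
      ≤ (1 / (Real.sqrt k * singularValue (ΔW t) i)) *
        ∑ j : Fin k,
          (2 * specNorm (ΔW t) * specNorm (ΔW j - ΔW t) + specNorm (ΔW j - ΔW t) ^ 2) := by
  classical
  have hk : 0 < k := t.pos
  set W := ΔW t with hW
  set Mt : Matrix (Fin m) (Fin k × Fin n) ℝ := Matrix.of fun i p => ΔW p.1 i p.2 with hMt
  set M : Matrix (Fin m) (Fin k × Fin n) ℝ := Matrix.of fun i (p : Fin k × Fin n) => ΔW t i p.2
    with hM
  set A : Matrix (Fin m) (Fin m) ℝ := Mt * Mtᴴ with hA'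
  set C : Matrix (Fin m) (Fin m) ℝ := W * Wᴴ with hC'
  have hA : A.IsHermitian := Matrix.isHermitian_mul_conjTranspose_self Mt
  have hC : C.IsHermitian := Matrix.isHermitian_mul_conjTranspose_self W
  -- step 1 : A = ∑ⱼ ΔWⱼ ΔWⱼᴴ
  have hAeq : A = ∑ j, ΔW j * (ΔW j)ᴴ := by
    ext a b
    simp only [hA', Matrix.mul_apply, Matrix.sum_apply, Matrix.conjTranspose_apply,
      Matrix.of_apply, star_trivial, hMt]
    rw [Fintype.sum_prod_type]
  -- step 2 : M Mᴴ = k • C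
  have hMeq : M * Mᴴ = (k : ℝ) • C := by
    ext a b
    simp only [hM, hC', Matrix.mul_apply, Matrix.smul_apply, Matrix.conjTranspose_apply,
      Matrix.of_apply, star_trivial, smul_eq_mul, ← hW]
    rw [Fintype.sum_prod_type]
    dsimp only
    rw [Finset.sum_const, Finset.card_univ, Fintype.card_fin, nsmul_eq_mul]
  -- step 3 : rank
  have hrank : (i : ℕ) < C.rank := by
    have h1 : (M * Mᴴ).rank = M.rank := Matrix.rank_self_mul_conjTranspose M
    have h2 : (k : ℝ) • C = C * ((k : ℝ) • (1 : Matrix (Fin m) (Fin m) ℝ)) := by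
      rw [Matrix.mul_smul, mul_one]
    have h3 : ((k : ℝ) • C).rank = C.rank := by
      rw [h2]
      refine Matrix.rank_mul_eq_left_of_isUnit_det _ _ ?_
      rw [Matrix.det_smul, Matrix.det_one, mul_one]
      exact (isUnit_iff_ne_zero.mpr (pow_ne_zero _ (Nat.cast_ne_zero.mpr hk.ne')))
    rw [← h3, ← hMeq, h1]
    exact hi
  set ν := hC.eigenvalues with hν
  set c₀ := ν (Tuple.sort ν i.rev) with hc₀
  set a₀ := hA.eigenvalues (Tuple.sort hA.eigenvalues i.rev) with ha₀
  have hcnn : ∀ j, 0 ≤ ν j := fun j => Matrix.eigenvalues_self_mul_conjTranspose_nonneg W j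
  have hcpos : 0 < c₀ := SVBoundAux.sorted_pos hC hcnn hrank
  have hann : 0 ≤ a₀ := Matrix.eigenvalues_self_mul_conjTranspose_nonneg Mt _
  -- step 4 : norm bound
  have hnorm : ‖A - (k : ℝ) • C‖
      ≤ ∑ j : Fin k, (2 * ‖W‖ * ‖ΔW j - W‖ + ‖ΔW j - W‖ ^ 2) := by
    have hkC : (k : ℝ) • C = ∑ _j : Fin k, C := by
      rw [Finset.sum_const, Finset.card_univ, Fintype.card_fin, (Nat.cast_smul_eq_nsmul ℝ _ _).symm]
    rw [hAeq, hkC, ← Finset.sum_sub_distrib]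
    refine (norm_sum_le _ _).trans (Finset.sum_le_sum fun j _ => ?_)
    exact SVBoundAux.term_bound W (ΔW j)
  -- step 5 : Weyl
  have hup : a₀ ≤ (k : ℝ) * c₀ + ‖A - (k : ℝ) • C‖ := by
    obtain ⟨T, hdim, hq⟩ := SVBoundAux.exists_subspace_lo hC i.rev
    refine SVBoundAux.weyl_le hA i.rev ((k : ℝ) • C) ((k : ℝ) * c₀) T hdim fun x hx => ?_
    rw [SVBoundAux.qf_smul, mul_assoc]
    exact mul_le_mul_of_nonneg_left (hq x hx) (Nat.cast_nonneg k)
  have hdown : (k : ℝ) * c₀ ≤ a₀ + ‖A - (k : ℝ) • C‖ := by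
    obtain ⟨T, hdim, hq⟩ := SVBoundAux.exists_subspace_hi hC i.rev
    refine SVBoundAux.weyl_ge hA i.rev ((k : ℝ) • C) ((k : ℝ) * c₀) T hdim fun x hx => ?_
    rw [SVBoundAux.qf_smul, mul_assoc]
    exact mul_le_mul_of_nonneg_left (hq x hx) (Nat.cast_nonneg k)
  -- step 6 : final algebra
  have hgoal1 : singularValue Mt i = Real.sqrt a₀ := rfl
  have hgoal2 : singularValue W i = Real.sqrt c₀ := rfl
  have hspec : ∀ (X : Matrix (Fin m) (Fin n) ℝ), specNorm X = ‖X‖ := fun X => rfl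
  rw [hgoal1, hgoal2]
  simp only [hspec, ← hW]
  set D := ∑ j : Fin k, (2 * ‖W‖ * ‖ΔW j - W‖ + ‖ΔW j - W‖ ^ 2) with hD
  set s := Real.sqrt k * Real.sqrt c₀ with hs
  have hspos : 0 < s := mul_pos (Real.sqrt_pos.mpr (by positivity)) (Real.sqrt_pos.mpr hcpos)
  have hs2 : s ^ 2 = (k : ℝ) * c₀ := by
    rw [hs, mul_pow, Real.sq_sqrt (Nat.cast_nonneg k), Real.sq_sqrt hcpos.le]
  have habs : |a₀ - (k : ℝ) * c₀| ≤ D := by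
    rw [hD]
    refine abs_sub_le_iff.mpr ⟨by linarith [hup, hnorm], by linarith [hdown, hnorm]⟩
  have hkey : |Real.sqrt a₀ - s| * s ≤ D := by
    have h1 : (Real.sqrt a₀ - s) * (Real.sqrt a₀ + s) = a₀ - (k : ℝ) * c₀ := by
      have : (Real.sqrt a₀ - s) * (Real.sqrt a₀ + s) = Real.sqrt a₀ ^ 2 - s ^ 2 := by ring
      rw [this, Real.sq_sqrt hann, hs2]
    have h2 : |Real.sqrt a₀ - s| * (Real.sqrt a₀ + s) = |a₀ - (k : ℝ) * c₀| := by
      rw [← h1, abs_mul,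
        abs_of_nonneg (add_nonneg (Real.sqrt_nonneg a₀) hspos.le)]
    calc |Real.sqrt a₀ - s| * s ≤ |Real.sqrt a₀ - s| * (Real.sqrt a₀ + s) := by
          have := Real.sqrt_nonneg a₀
          nlinarith [abs_nonneg (Real.sqrt a₀ - s)]
      _ = |a₀ - (k : ℝ) * c₀| := h2
      _ ≤ D := habs
  rw [one_div, inv_mul_eq_div]
  exact (le_div_iff₀ hspos).mpr hkey
end
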